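/- arXiv:1209.2662 — 3 statements merged into one kernel-verified Lean document; each statement's English description precedes it below -/
import Mathlib

section
/- Let ω(t) = (1 + t/4)·(1/y²)√-1 dz∧dz̄ + y·√-1 dw∧dw̄ on H×ℂ. Then det(g(t)) = (1 + t/4)/y, hence Ric(ω(t)) = Ric(ω₀) is independent of t, and ∂ω(t)/∂t = -Ric(ω(t)); i.e., ω(t) solves the Chern-Ricci flow for all t ≥ 0. -/
/-!
Every function involved depends on `z` only through `y = Im z`. For such a function `h(y)` one
has `∂_z h = -(i/2) h'(y)` and `∂_z̄ h = (i/2) h'(y)`, while the `w`-derivatives vanish, so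
`∂∂̄ h(y)` has the single entry `h''(y)/4`. For `h = log (c/y) = log c - log y` this is
`1/(4y²)`, independent of `c`, and it is also `∂_t` of the coefficient `(1 + t/4)/y²`.
-/

open Complex

/-- Wirtinger derivative `∂/∂z_i` (i = 0 is the `z` variable, i = 1 is the `w`
variable) of a function on `ℂ × ℂ`. -/
noncomputable def wd (i : Fin 2) (f : ℂ × ℂ → ℂ) (p : ℂ × ℂ) : ℂ :=
  if i = 0 then (fderiv ℝ f p (1, 0) - Complex.I * fderiv ℝ f p (Complex.I, 0)) / 2
  else (fderiv ℝ f p (0, 1) - Complex.I * fderiv ℝ f p (0, Complex.I)) / 2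

/-- Wirtinger derivative `∂/∂z̄_i` of a function on `ℂ × ℂ`. -/
noncomputable def wdb (i : Fin 2) (f : ℂ × ℂ → ℂ) (p : ℂ × ℂ) : ℂ :=
  if i = 0 then (fderiv ℝ f p (1, 0) + Complex.I * fderiv ℝ f p (Complex.I, 0)) / 2
  else (fderiv ℝ f p (0, 1) + Complex.I * fderiv ℝ f p (0, Complex.I)) / 2

/-- The coefficients of the evolved Tricerri metric
`ω(t) = (1 + t/4)(1/y²)√-1 dz∧dz̄ + y √-1 dw∧dw̄` on `H×ℂ` (index 0 = `z`,
index 1 = `w`). -/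
noncomputable def tric (t : ℝ) (i j : Fin 2) (p : ℂ × ℂ) : ℂ :=
  if i = 0 ∧ j = 0 then (((1 + t / 4) / p.1.im ^ 2 : ℝ) : ℂ)
  else if i = 1 ∧ j = 1 then ((p.1.im : ℝ) : ℂ) else 0

open Filter Topology

lemma hasFDerivAt_comp_im {h : ℝ → ℂ} {h' : ℂ} {p : ℂ × ℂ} (hh : HasDerivAt h h' p.1.im) :
    HasFDerivAt (fun q : ℂ × ℂ => h q.1.im)
      ((ContinuousLinearMap.smulRight (1 : ℝ →L[ℝ] ℝ) h').comp
        (imCLM.comp (ContinuousLinearMap.fst ℝ ℂ ℂ))) p :=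
  hh.hasFDerivAt.comp p (imCLM.comp (ContinuousLinearMap.fst ℝ ℂ ℂ)).hasFDerivAt

lemma wd_comp_im {h : ℝ → ℂ} {h' : ℂ} {p : ℂ × ℂ} (hh : HasDerivAt h h' p.1.im) (i : Fin 2) :
    wd i (fun q => h q.1.im) p = if i = 0 then -I * h' / 2 else 0 := by
  fin_cases i <;> simp [wd, (hasFDerivAt_comp_im hh).fderiv]

lemma wdb_comp_im {h : ℝ → ℂ} {h' : ℂ} {p : ℂ × ℂ} (hh : HasDerivAt h h' p.1.im) (j : Fin 2) :
    wdb j (fun q => h q.1.im) p = if j = 0 then I * h' / 2 else 0 := by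
  fin_cases j <;> simp [wdb, (hasFDerivAt_comp_im hh).fderiv]

lemma wd_congr_of_eventuallyEq {f g : ℂ × ℂ → ℂ} {p : ℂ × ℂ} (hfg : f =ᶠ[𝓝 p] g) (i : Fin 2) :
    wd i f p = wd i g p := by
  simp only [wd, hfg.fderiv_eq]

lemma wd_wdb_comp_im {h h' : ℝ → ℂ} {h'' : ℂ} {p : ℂ × ℂ}
    (hh : ∀ᶠ s in 𝓝 p.1.im, HasDerivAt h (h' s) s) (hh' : HasDerivAt h' h'' p.1.im) (i j : Fin 2) :
    wd i (wdb j (fun q => h q.1.im)) p = if i = 0 ∧ j = 0 then h'' / 4 else 0 := by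
  set a : ℂ := if j = 0 then I / 2 else 0
  have hwdb : wdb j (fun q => h q.1.im) =ᶠ[𝓝 p] fun q => a * h' q.1.im := by
    have hcont : Continuous fun q : ℂ × ℂ => q.1.im := continuous_im.comp continuous_fst
    filter_upwards [hcont.continuousAt.eventually hh] with q hq
    rw [wdb_comp_im hq]
    simp only [a]
    split_ifs <;> ring
  rw [wd_congr_of_eventuallyEq hwdb, wd_comp_im (hh'.const_mul a)]
  by_cases hi : i = 0 <;> by_cases hj : j = 0 <;> simp [a, hi, hj]
  linear_combination (-h'' / 4) * I_sq

lemma hasDerivAt_ofReal_log_div {c s : ℝ} (hc : c ≠ 0) (hs : s ≠ 0) :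
    HasDerivAt (fun x : ℝ => ((Real.log (c / x) : ℝ) : ℂ)) ((-s⁻¹ : ℝ) : ℂ) s := by
  have h := ((hasDerivAt_inv hs).const_mul c).log (by simp [hc, hs])
  simp only [← div_eq_mul_inv] at h
  convert h.ofReal_comp using 2
  field_simp

lemma wd_wdb_log_div_im {c : ℝ} (hc : c ≠ 0) {p : ℂ × ℂ} (hp : p.1.im ≠ 0) (i j : Fin 2) :
    wd i (wdb j (fun q => ((Real.log (c / q.1.im) : ℝ) : ℂ))) p
      = if i = 0 ∧ j = 0 then (((1 / 4) / p.1.im ^ 2 : ℝ) : ℂ) else 0 := by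
  have hh : ∀ᶠ s in 𝓝 p.1.im,
      HasDerivAt (fun x : ℝ => ((Real.log (c / x) : ℝ) : ℂ)) ((-s⁻¹ : ℝ) : ℂ) s :=
    (eventually_ne_nhds hp).mono fun s hs => hasDerivAt_ofReal_log_div hc hs
  rw [wd_wdb_comp_im hh (hasDerivAt_inv hp).neg.ofReal_comp]
  push_cast
  congr 1
  ring

lemma tric_det (t : ℝ) (p : ℂ × ℂ) :
    tric t 0 0 p * tric t 1 1 p - tric t 0 1 p * tric t 1 0 p
      = (((1 + t / 4) / p.1.im : ℝ) : ℂ) := by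
  simp only [tric]
  norm_num
  field_simp

lemma hasDerivAt_tric (t : ℝ) (i j : Fin 2) (p : ℂ × ℂ) :
    HasDerivAt (fun s => tric s i j p)
      (if i = 0 ∧ j = 0 then (((1 / 4) / p.1.im ^ 2 : ℝ) : ℂ) else 0) t := by
  by_cases hij : i = 0 ∧ j = 0
  · simp only [tric, hij, and_self, if_true]
    have h := ((((hasDerivAt_id t).div_const 4).const_add 1).div_const (p.1.im ^ 2)).ofReal_comp
    simpa using h
  · simp only [tric, hij, if_false]
    exact hasDerivAt_const t _

/-- For `ω(t) = (1 + t/4)(1/y²)√-1 dz∧dz̄ + y √-1 dw∧dw̄` on `H×ℂ` one has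
`det g(t) = (1+t/4)/y`, hence `Ric(ω(t)) = -√-1 ∂∂̄ log det g(t)` coincides with
`Ric(ω₀)` (it is independent of `t`), and `∂ω(t)/∂t = -Ric(ω(t))`, i.e. `ω(t)`
solves the Chern-Ricci flow for all `t ≥ 0`. -/
theorem stmt2 (t : ℝ) (ht : 0 ≤ t) (p : ℂ × ℂ) (hp : 0 < p.1.im) :
    (tric t 0 0 p * tric t 1 1 p - tric t 0 1 p * tric t 1 0 p
        = (((1 + t / 4) / p.1.im : ℝ) : ℂ)) ∧
    (∀ i j : Fin 2,
      -wd i (wdb j (fun q => ((Real.log ((1 + t / 4) / q.1.im) : ℝ) : ℂ))) p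
        = -wd i (wdb j (fun q => ((Real.log (1 / q.1.im) : ℝ) : ℂ))) p) ∧
    (∀ i j : Fin 2,
      deriv (fun s : ℝ => tric s i j p) t
        = wd i (wdb j (fun q => ((Real.log ((1 + t / 4) / q.1.im) : ℝ) : ℂ))) p) := by
  have hc : 1 + t / 4 ≠ 0 := by positivity
  refine ⟨tric_det t p, fun i j => ?_, fun i j => ?_⟩
  · rw [wd_wdb_log_div_im hc hp.ne', wd_wdb_log_div_im one_ne_zero hp.ne']
  · rw [(hasDerivAt_tric t i j p).deriv, wd_wdb_log_div_im hc hp.ne']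
end

section
/- The Vaisman-Tricerri metric ω₀ on H×ℂ (with parameter m) satisfies the Gauduchon condition ∂∂̄ω₀ = 0, i.e., it is a Gauduchon metric. -/
/-!
All coefficients of `ω₀` depend only on `y = Im z` and `v = Im w`. On such functions
`∂/∂z = -(i/2) ∂/∂y` and `∂/∂z̄ = (i/2) ∂/∂y`, and likewise for `w` and `v`, so every mixed
Wirtinger derivative `∂_i ∂̄_j` is a quarter of the corresponding real second partial derivative
in `(y, v)`. The Gauduchon coefficient is therefore
`(∂_v² g₀₀ - ∂_y ∂_v g₁₀ - ∂_v ∂_y g₀₁) / 4 = (2/y² - 1/y² - 1/y²) / 4 = 0`.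
-/

open Complex

/-- The coefficients of the Vaisman–Tricerri metric on `H×ℂ` with parameter `m`. -/
noncomputable def gTV (m : ℝ) (i j : Fin 2) (p : ℂ × ℂ) : ℂ :=
  if i = 0 ∧ j = 0 then
    (((1 + (p.2.im - m * Real.log p.1.im) ^ 2) / p.1.im ^ 2 : ℝ) : ℂ)
  else if i = 1 ∧ j = 1 then 1
  else ((-( (p.2.im - m * Real.log p.1.im) / p.1.im) : ℝ) : ℂ)

open ContinuousLinearMap Filter Topology

noncomputable def imProd : ℂ × ℂ →L[ℝ] ℝ × ℝ := imCLM.prodMap imCLM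

lemma imProd_apply (q : ℂ × ℂ) : imProd q = (q.1.im, q.2.im) := rfl

lemma wd_comp_imProd {G : ℝ × ℝ → ℂ} {q : ℂ × ℂ} (hG : DifferentiableAt ℝ G (imProd q))
    (i : Fin 2) :
    wd i (G ∘ imProd) q = -(I / 2) * fderiv ℝ G (imProd q) (Module.Basis.finTwoProd ℝ i) := by
  rw [wd, fderiv_comp q hG imProd.differentiableAt, imProd.fderiv]
  fin_cases i <;> simp [imProd_apply, ← Prod.zero_eq_mk] <;> ring

lemma wdb_comp_imProd {G : ℝ × ℝ → ℂ} {q : ℂ × ℂ} (hG : DifferentiableAt ℝ G (imProd q))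
    (i : Fin 2) :
    wdb i (G ∘ imProd) q = I / 2 * fderiv ℝ G (imProd q) (Module.Basis.finTwoProd ℝ i) := by
  rw [wdb, fderiv_comp q hG imProd.differentiableAt, imProd.fderiv]
  fin_cases i <;> simp [imProd_apply, ← Prod.zero_eq_mk] <;> ring

lemma Filter.EventuallyEq.wd_eq {f g : ℂ × ℂ → ℂ} {p : ℂ × ℂ} (h : f =ᶠ[𝓝 p] g) (i : Fin 2) :
    wd i f p = wd i g p := by
  simp only [wd, h.fderiv_eq]

lemma DifferentiableAt.hasFDerivAt_ofReal_comp {E : Type*} [NormedAddCommGroup E]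
    [NormedSpace ℝ E] {F : E → ℝ} {x : E}
    (hF : DifferentiableAt ℝ F x) :
    HasFDerivAt (fun x => (F x : ℂ)) (ofRealCLM.comp (fderiv ℝ F x)) x :=
  ofRealCLM.hasFDerivAt.comp x hF.hasFDerivAt

lemma wd_wdb_ofReal_comp_imProd {F G : ℝ × ℝ → ℝ} {p : ℂ × ℂ} (i j : Fin 2)
    (hF : ∀ᶠ x in 𝓝 (imProd p),
      DifferentiableAt ℝ F x ∧ fderiv ℝ F x (Module.Basis.finTwoProd ℝ j) = G x)
    (hG : DifferentiableAt ℝ G (imProd p)) :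
    wd i (wdb j fun q => (F (imProd q) : ℂ)) p =
      fderiv ℝ G (imProd p) (Module.Basis.finTwoProd ℝ i) / 4 := by
  have hinner : (wdb j fun q => (F (imProd q) : ℂ)) =ᶠ[𝓝 p]
      (fun x => I / 2 * (G x : ℂ)) ∘ imProd := by
    refine (imProd.continuous.continuousAt.eventually hF).mono fun q ⟨hFq, hGq⟩ => ?_
    change wdb j ((fun x => (F x : ℂ)) ∘ imProd) q = _
    rw [wdb_comp_imProd hFq.hasFDerivAt_ofReal_comp.differentiableAt j,
      hFq.hasFDerivAt_ofReal_comp.fderiv]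
    simp [hGq]
  have hG' := hG.hasFDerivAt_ofReal_comp
  rw [hinner.wd_eq, wd_comp_imProd (hG'.differentiableAt.const_mul _),
    fderiv_const_mul hG'.differentiableAt, hG'.fderiv]
  simp only [smul_apply, smul_eq_mul, comp_apply, ofRealCLM_apply]
  ring_nf
  rw [I_sq]
  ring

lemma fderiv_apply_fst_of_hasDerivAt {E : Type*} [NormedAddCommGroup E] [NormedSpace ℝ E]
    {F : ℝ × ℝ → E} {x : ℝ × ℝ} {d : E}
    (hF : DifferentiableAt ℝ F x) (hd : HasDerivAt (fun y => F (y, x.2)) d x.1) :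
    fderiv ℝ F x (Module.Basis.finTwoProd ℝ 0) = d := by
  have := hF.hasFDerivAt.comp_hasDerivAt x.1
    ((hasDerivAt_id x.1).prodMk (hasDerivAt_const x.1 x.2))
  simpa using this.unique hd

lemma fderiv_apply_snd_of_hasDerivAt {E : Type*} [NormedAddCommGroup E] [NormedSpace ℝ E]
    {F : ℝ × ℝ → E} {x : ℝ × ℝ} {d : E}
    (hF : DifferentiableAt ℝ F x) (hd : HasDerivAt (fun v => F (x.1, v)) d x.2) :
    fderiv ℝ F x (Module.Basis.finTwoProd ℝ 1) = d := by
  have := hF.hasFDerivAt.comp_hasDerivAt x.2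
    ((hasDerivAt_const x.2 x.1).prodMk (hasDerivAt_id x.2))
  simpa using this.unique hd

noncomputable def vtCoeff (m : ℝ) (i j : Fin 2) (x : ℝ × ℝ) : ℝ :=
  if i = 0 ∧ j = 0 then (1 + (x.2 - m * Real.log x.1) ^ 2) / x.1 ^ 2
  else if i = 1 ∧ j = 1 then 1
  else -((x.2 - m * Real.log x.1) / x.1)

lemma gTV_eq_ofReal_vtCoeff (m : ℝ) (i j : Fin 2) :
    gTV m i j = fun q => (vtCoeff m i j (imProd q) : ℂ) := by
  funext q
  simp only [gTV, vtCoeff, imProd_apply]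
  split_ifs <;> simp

lemma differentiableAt_vtCoeff (m : ℝ) (i j : Fin 2) {x : ℝ × ℝ} (hx : x.1 ≠ 0) :
    DifferentiableAt ℝ (vtCoeff m i j) x := by
  unfold vtCoeff
  split_ifs <;> fun_prop (disch := simp [hx])

lemma fderiv_vtCoeff_zero_zero_snd (m : ℝ) {x : ℝ × ℝ} (hx : x.1 ≠ 0) :
    fderiv ℝ (vtCoeff m 0 0) x (Module.Basis.finTwoProd ℝ 1) =
      2 * (x.2 - m * Real.log x.1) / x.1 ^ 2 := by
  refine fderiv_apply_snd_of_hasDerivAt (differentiableAt_vtCoeff m 0 0 hx) ?_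
  exact ((((hasDerivAt_id' x.2).sub_const (m * Real.log x.1)).fun_pow 2).const_add 1).div_const
    (x.1 ^ 2) |>.congr_deriv (by ring)

lemma fderiv_vtCoeff_one_zero_snd (m : ℝ) {x : ℝ × ℝ} (hx : x.1 ≠ 0) :
    fderiv ℝ (vtCoeff m 1 0) x (Module.Basis.finTwoProd ℝ 1) = -x.1⁻¹ := by
  refine fderiv_apply_snd_of_hasDerivAt (differentiableAt_vtCoeff m 1 0 hx) ?_
  exact (((hasDerivAt_id' x.2).sub_const (m * Real.log x.1)).div_const x.1).neg.congr_deriv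
    (by ring)

lemma fderiv_vtCoeff_zero_one_fst (m : ℝ) {x : ℝ × ℝ} (hx : x.1 ≠ 0) :
    fderiv ℝ (vtCoeff m 0 1) x (Module.Basis.finTwoProd ℝ 0) =
      (x.2 - m * Real.log x.1 + m) / x.1 ^ 2 := by
  refine fderiv_apply_fst_of_hasDerivAt (differentiableAt_vtCoeff m 0 1 hx) ?_
  exact ((((Real.hasDerivAt_log hx).const_mul m).const_sub x.2).fun_div (hasDerivAt_id' x.1)
    hx).neg.congr_deriv (by field_simp; ring)

lemma eventually_fst_ne_zero_nhds_imProd {p : ℂ × ℂ} (hp : p.1.im ≠ 0) :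
    ∀ᶠ x in 𝓝 (imProd p), x.1 ≠ 0 :=
  continuousAt_fst.eventually_ne hp

lemma wd_wdb_gTV_zero_zero (m : ℝ) {p : ℂ × ℂ} (hp : p.1.im ≠ 0) :
    wd 1 (wdb 1 (gTV m 0 0)) p = ((2 / p.1.im ^ 2 : ℝ) : ℂ) / 4 := by
  rw [gTV_eq_ofReal_vtCoeff, wd_wdb_ofReal_comp_imProd 1 1
    (G := fun x => 2 * (x.2 - m * Real.log x.1) / x.1 ^ 2) ?hF ?hG,
    fderiv_apply_snd_of_hasDerivAt ?hG
    ((((hasDerivAt_id' _).sub_const (m * Real.log p.1.im)).const_mul (2 : ℝ)).div_const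
      (p.1.im ^ 2))]
  case hF =>
    filter_upwards [eventually_fst_ne_zero_nhds_imProd hp] with x hx
    exact ⟨differentiableAt_vtCoeff m 0 0 hx, fderiv_vtCoeff_zero_zero_snd m hx⟩
  case hG => fun_prop (disch := simp [imProd_apply, hp])
  simp

lemma wd_wdb_gTV_one_zero (m : ℝ) {p : ℂ × ℂ} (hp : p.1.im ≠ 0) :
    wd 0 (wdb 1 (gTV m 1 0)) p = ((p.1.im ^ 2)⁻¹ : ℝ) / 4 := by
  rw [gTV_eq_ofReal_vtCoeff, wd_wdb_ofReal_comp_imProd 0 1 (G := fun x => -x.1⁻¹) ?hF ?hG,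
    fderiv_apply_fst_of_hasDerivAt ?hG (hasDerivAt_inv hp).neg]
  case hF =>
    filter_upwards [eventually_fst_ne_zero_nhds_imProd hp] with x hx
    exact ⟨differentiableAt_vtCoeff m 1 0 hx, fderiv_vtCoeff_one_zero_snd m hx⟩
  case hG => fun_prop (disch := simp [imProd_apply, hp])
  simp

lemma wd_wdb_gTV_zero_one (m : ℝ) {p : ℂ × ℂ} (hp : p.1.im ≠ 0) :
    wd 1 (wdb 0 (gTV m 0 1)) p = ((p.1.im ^ 2)⁻¹ : ℝ) / 4 := by
  rw [gTV_eq_ofReal_vtCoeff, wd_wdb_ofReal_comp_imProd 1 0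
    (G := fun x => (x.2 - m * Real.log x.1 + m) / x.1 ^ 2) ?hF ?hG,
    fderiv_apply_snd_of_hasDerivAt ?hG
    ((((hasDerivAt_id' _).sub_const (m * Real.log p.1.im)).add_const m).div_const
      (p.1.im ^ 2))]
  case hF =>
    filter_upwards [eventually_fst_ne_zero_nhds_imProd hp] with x hx
    exact ⟨differentiableAt_vtCoeff m 0 1 hx, fderiv_vtCoeff_zero_one_fst m hx⟩
  case hG => fun_prop (disch := simp [imProd_apply, hp])
  simp

lemma wd_wdb_gTV_one_one (m : ℝ) (p : ℂ × ℂ) : wd 0 (wdb 0 (gTV m 1 1)) p = 0 := by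
  have hconst : gTV m 1 1 = fun _ => 1 := by
    ext q
    simp [gTV]
  have hinner : wdb 0 (gTV m 1 1) = fun _ => 0 := by
    ext q
    simp [hconst, wdb]
  simp [hinner, wd]

/-- The Vaisman–Tricerri metric `ω₀` on `H×ℂ` (any parameter `m ∈ ℝ`)
satisfies the Gauduchon condition `∂∂̄ω₀ = 0`, i.e. the coefficient of the (2,2)-form
`∂∂̄ω₀` vanishes:
`∂₀∂̄₀ g₁₁ + ∂₁∂̄₁ g₀₀ - ∂₀∂̄₁ g₁₀ - ∂₁∂̄₀ g₀₁ = 0` at every point of `H×ℂ`. -/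
theorem stmt9 (m : ℝ) (p : ℂ × ℂ) (hp : 0 < p.1.im) :
    wd 0 (wdb 0 (gTV m 1 1)) p + wd 1 (wdb 1 (gTV m 0 0)) p
      - wd 0 (wdb 1 (gTV m 1 0)) p - wd 1 (wdb 0 (gTV m 0 1)) p = 0 := by
  rw [wd_wdb_gTV_one_one, wd_wdb_gTV_zero_zero m hp.ne', wd_wdb_gTV_one_zero m hp.ne',
    wd_wdb_gTV_zero_one m hp.ne']
  push_cast
  ring
end

section
/- Let X be a compact metric space with an isometric action of a finite group Γ, and let Y be another compact metric space with trivial Γ-action. If a sequence of Γ-invariant metrics d_t on X converges to (Y, d_Y) in the Γ-equivariant Gromov-Hausdorff sense, then the quotient metric spaces (X/Γ, d_t) converge to (Y, d_Y) in the Gromov-Hausdorff sense. -/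
/-- Let `X` be a compact space with an isometric action of a finite
group `Γ`, and `Y` a compact metric space (with trivial `Γ`-action). If a sequence of
`Γ`-invariant metrics `d n` on `X` converges to `(Y, d_Y)` in the `Γ`-equivariant
Gromov-Hausdorff sense (via `ε`-approximations which are moreover `ε`-equivariant),
then the quotient metric spaces `(X/Γ, d̄ n)`, where
`d̄ n (Γx)(Γx') = min_{γ∈Γ} d n x (γ·x')`, converge to `(Y, d_Y)` in the
Gromov-Hausdorff sense (again expressed via `ε`-approximations). -/
theorem stmt18 {X : Type*} [TopologicalSpace X] [CompactSpace X] [Nonempty X]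
    {Γ : Type*} [Group Γ] [Finite Γ] [MulAction Γ X]
    {Y : Type*} [MetricSpace Y] [CompactSpace Y] [Nonempty Y]
    (d : ℕ → X → X → ℝ)
    -- each `d n` is a metric on `X` compatible with the topology:
    (hsymm : ∀ n x x', d n x x' = d n x' x)
    (htri : ∀ n x x' x'', d n x x'' ≤ d n x x' + d n x' x'')
    (hrefl : ∀ n x, d n x x = 0)
    (hsep : ∀ n x x', d n x x' = 0 → x = x')
    (hcont : ∀ n, Continuous fun q : X × X => d n q.1 q.2)
    -- each `d n` is `Γ`-invariant:
    (hinv : ∀ n (γ : Γ) x x', d n (γ • x) (γ • x') = d n x x')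
    -- equivariant Gromov-Hausdorff convergence `(X, d n, Γ) → (Y, d_Y, {1})`:
    (hconv : ∀ ε > 0, ∃ N, ∀ n ≥ N, ∃ (f : X → Y) (g : Y → X),
      (∀ x x', |d n x x' - dist (f x) (f x')| ≤ ε) ∧
      (∀ x, d n x (g (f x)) ≤ ε) ∧
      (∀ y y', |dist y y' - d n (g y) (g y')| ≤ ε) ∧
      (∀ y, dist y (f (g y)) ≤ ε) ∧
      (∀ (γ : Γ) x, dist (f (γ • x)) (f x) ≤ ε)) :
    -- Gromov-Hausdorff convergence of the quotients `(X/Γ, d̄ n) → (Y, d_Y)`: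
    ∀ ε > 0, ∃ N, ∀ n ≥ N, ∃ (f : X → Y) (g : Y → X),
      (∀ x x', |(⨅ γ : Γ, d n x (γ • x')) - dist (f x) (f x')| ≤ ε) ∧
      (∀ x, (⨅ γ : Γ, d n x (γ • g (f x))) ≤ ε) ∧
      (∀ y y', |dist y y' - ⨅ γ : Γ, d n (g y) (γ • g y')| ≤ ε) ∧
      (∀ y, dist y (f (g y)) ≤ ε) := by
  intro ε hε
  obtain ⟨N, hN⟩ := hconv (ε / 4) (by linarith)
  refine ⟨N, fun n hn => ?_⟩
  obtain ⟨f, g, h1, h2, h3, h4, h5⟩ := hN n hn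
  have hbdd : ∀ (x x' : X), BddBelow (Set.range fun γ : Γ => d n x (γ • x')) :=
    fun x x' => (Set.finite_range _).bddBelow
  have hle : ∀ (x x' : X), (⨅ γ : Γ, d n x (γ • x')) ≤ d n x x' := by
    intro x x'
    have := ciInf_le (hbdd x x') (1 : Γ)
    simpa using this
  refine ⟨f, g, ?_, ?_, ?_, fun y => le_trans (h4 y) (by linarith)⟩
  · intro x x'
    rw [abs_le]
    constructor
    · -- inf ≥ dist - 2ε/4  ⇒ inf - dist ≥ -ε
      have hlb : dist (f x) (f x') - ε / 2 ≤ ⨅ γ : Γ, d n x (γ • x') := by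
        apply le_ciInf
        intro γ
        have ha := abs_le.mp (h1 x (γ • x'))
        have hb := h5 γ x'
        have : dist (f x) (f x') ≤ dist (f x) (f (γ • x')) + dist (f (γ • x')) (f x') :=
          dist_triangle _ _ _
        linarith [ha.1, ha.2]
      linarith [dist_nonneg (x := f x) (y := f x')]
    · have := abs_le.mp (h1 x x')
      linarith [hle x x']
  · intro x
    exact le_trans (hle x (g (f x))) (le_trans (h2 x) (by linarith))
  · intro y y'
    rw [abs_le]
    constructor
    · have := abs_le.mp (h3 y y')
      linarith [hle (g y) (g y')]
    · -- dist y y' ≤ inf + ε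
      have hlb : dist y y' - ε ≤ ⨅ γ : Γ, d n (g y) (γ • g y') := by
        apply le_ciInf
        intro γ
        have ha := abs_le.mp (h1 (g y) (γ • g y'))
        have hb := h5 γ (g y')
        have hc := h4 y
        have hd := h4 y'
        have t1 : dist y y' ≤ dist y (f (g y)) + dist (f (g y)) (f (γ • g y'))
            + dist (f (γ • g y')) (f (g y')) + dist (f (g y')) y' := by
          have := dist_triangle4 y (f (g y)) (f (γ • g y')) y'
          have := dist_triangle (f (γ • g y')) (f (g y')) y'
          linarith [dist_triangle4 y (f (g y)) (f (γ • g y')) y',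
            dist_triangle (f (γ • g y')) (f (g y')) y']
        rw [dist_comm (f (g y')) y'] at t1
        linarith [ha.1, ha.2]
      linarith
end
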